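/- Let A₁ and A₂ be unital associative ℂ-algebras, let U₁ be an irreducible A₁-module and U₂ an irreducible A₂-module. If either every A₁-module endomorphism of U₁ is a scalar multiple of the identity, or A₁ has countable dimension over ℂ, then U₁ ⊗ U₂ is an irreducible A₁ ⊗ A₂-module. -/

import Mathlib

/-!
Once `End_{A₁} U₁ = ℂ`, the Jacobson density theorem lets `A₁` act on the finitely many first
factors of a nonzero `w` in an invariant subspace `S` as any rank-one map `x ↦ φ x • p`; this
sends `w` to a nonzero pure tensor `p ⊗ q ∈ S`, and irreducibility of `U₁` and then of `U₂`
spreads it over all of `U₁ ⊗ U₂`.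

Countable dimension of `A₁` forces `End_{A₁} U₁ = ℂ` (Dixmier): otherwise, by Schur, some `f` in
the commutant has `f - c` invertible for every `c : ℂ`, so `ℂ(X)` maps into `End_ℂ U₁` with unit
values and hence, through `g ↦ g v`, injectively into `U₁`. But `ℂ(X)` has uncountable dimension,
while `U₁`, a quotient of `A₁`, has countable dimension.
-/

open scoped TensorProduct

noncomputable section
namespace Twisted

/-- `U` (with representation `ρ`) is an irreducible `A`-module. -/
def AIrred (A : Type) [Ring A] [Algebra ℂ A] (U : Type) [AddCommGroup U] [Module ℂ U]
    (ρ : A →ₐ[ℂ] Module.End ℂ U) : Prop :=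
  Nontrivial U ∧ ∀ S : Submodule ℂ U, (∀ a : A, ∀ x ∈ S, ρ a x ∈ S) → S = ⊥ ∨ S = ⊤

/-- `A` has countable dimension over `ℂ` (a countable basis). -/
def CountableDim (A : Type) [Ring A] [Algebra ℂ A] : Prop :=
  ∃ ι : Type, Countable ι ∧ Nonempty (Module.Basis ι ℂ A)

end Twisted

open Polynomial nonZeroDivisors

theorem isUnit_aeval_of_forall_isUnit_sub {K R : Type*} [Field K] [IsAlgClosed K] [Ring R]
    [Algebra K R] {x : R} (hx : ∀ c : K, IsUnit (x - algebraMap K R c)) {p : K[X]} (hp : p ≠ 0) :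
    IsUnit (aeval x p) := by
  have hprod (s : Multiset K) : IsUnit (aeval x (s.map fun r ↦ X - C r).prod) := by
    induction s using Multiset.induction_on with
    | empty => simp
    | cons r s ih => simpa using (hx r).mul ih
  rw [← C_leadingCoeff_mul_prod_multiset_X_sub_C (IsAlgClosed.card_roots_eq_natDegree (p := p)),
    map_mul, aeval_C]
  exact ((Ne.isUnit (leadingCoeff_ne_zero.mpr hp)).map _).mul (hprod _)

theorem nonempty_algHom_fractionRing_of_forall_isUnit_sub {K R : Type*} [Field K] [IsAlgClosed K]
    [Ring R] [Algebra K R] {x : R} (hx : ∀ c : K, IsUnit (x - algebraMap K R c)) :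
    Nonempty (FractionRing K[X] →ₐ[K] R) := by
  let f : K[X] →+* R := (aeval x).toRingHom
  have hf (s : K[X]⁰) : IsUnit (f.toMonoidHom.comp (K[X]⁰).subtype s) :=
    isUnit_aeval_of_forall_isUnit_sub hx (nonZeroDivisors.coe_ne_zero s)
  let φ := OreLocalization.universalHom f (IsUnit.liftRight _ hf) fun _ ↦ rfl
  refine ⟨{ φ with commutes' := fun c ↦ ?_ }⟩
  change φ (OreLocalization.numeratorHom (C c)) = _
  exact (OreLocalization.universalHom_commutes ..).trans (aeval_C x c)

theorem cardinalMk_le_rank_fractionRing_polynomial (K : Type*) [Field K] :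
    Cardinal.mk K ≤ Module.rank K (FractionRing K[X]) :=
  ((transcendental_algebraMap_iff (IsFractionRing.injective K[X] (FractionRing K[X]))).2
    (transcendental_X K)).linearIndependent_sub_inv.cardinal_le_rank

namespace Twisted

section Irreducible

variable {A U : Type} [Ring A] [Algebra ℂ A] [AddCommGroup U] [Module ℂ U]
  {ρ : A →ₐ[ℂ] Module.End ℂ U}

def HasScalarCommutant (ρ : A →ₐ[ℂ] Module.End ℂ U) : Prop :=
  ∀ f : Module.End ℂ U, (∀ a, Commute f (ρ a)) → ∃ c : ℂ, f = c • 1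

theorem AIrred.eq_top_of_mem (h : AIrred A U ρ) {S : Submodule ℂ U}
    (hS : ∀ a, ∀ x ∈ S, ρ a x ∈ S) {x : U} (hx : x ∈ S) (hx0 : x ≠ 0) : S = ⊤ :=
  (h.2 S hS).resolve_left fun hbot ↦ hx0 (by rwa [hbot, Submodule.mem_bot] at hx)

theorem AIrred.bijective_of_commute (h : AIrred A U ρ) {f : Module.End ℂ U}
    (hf : ∀ a, Commute f (ρ a)) (hf0 : f ≠ 0) : Function.Bijective f := by
  have hcomm (a : A) (x : U) : f (ρ a x) = ρ a (f x) := LinearMap.congr_fun (hf a) x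
  have hker : LinearMap.ker f = ⊥ := by
    refine (h.2 _ fun a x hx ↦ ?_).resolve_right fun htop ↦ hf0 (LinearMap.ker_eq_top.mp htop)
    rw [LinearMap.mem_ker] at hx ⊢
    rw [hcomm, hx, map_zero]
  have hrange : LinearMap.range f = ⊤ := by
    refine (h.2 _ fun a x hx ↦ ?_).resolve_left fun hbot ↦ hf0 (LinearMap.range_eq_bot.mp hbot)
    obtain ⟨y, rfl⟩ := LinearMap.mem_range.mp hx
    exact ⟨ρ a y, hcomm a y⟩
  exact ⟨LinearMap.ker_eq_bot.mp hker, LinearMap.range_eq_top.mp hrange⟩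

theorem AIrred.rank_le_aleph0 (h : AIrred A U ρ) (hA : CountableDim A) :
    Module.rank ℂ U ≤ Cardinal.aleph0 := by
  obtain ⟨ι, _, ⟨b⟩⟩ := hA
  obtain ⟨v, hv⟩ := @exists_ne U h.1 0
  let L : A →ₗ[ℂ] U := LinearMap.applyₗ v ∘ₗ ρ.toLinearMap
  have hL : LinearMap.range L = ⊤ := h.eq_top_of_mem
    (fun a _ ⟨b, hb⟩ ↦ ⟨a * b, by simp [L, ← hb]⟩) ⟨1, by simp [L]⟩ hv
  calc Module.rank ℂ U ≤ Module.rank ℂ A :=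
        LinearMap.rank_le_of_surjective L (LinearMap.range_eq_top.mp hL)
    _ = Cardinal.mk ι := b.mk_eq_rank''.symm
    _ ≤ Cardinal.aleph0 := Cardinal.mk_le_aleph0

theorem AIrred.hasScalarCommutant (h : AIrred A U ρ) (hA : CountableDim A) :
    HasScalarCommutant ρ := by
  intro f hf
  by_contra! hne
  have hunit (c : ℂ) : IsUnit (f - algebraMap ℂ _ c) := by
    refine (Module.End.isUnit_iff _).mpr (h.bijective_of_commute (fun a ↦ ?_) ?_)
    · exact (hf a).sub_left (Algebra.commutes' c (ρ a))
    · rw [sub_ne_zero, Algebra.algebraMap_eq_smul_one]; exact hne c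
  obtain ⟨φ⟩ := nonempty_algHom_fractionRing_of_forall_isUnit_sub hunit
  obtain ⟨v, hv⟩ := @exists_ne U h.1 0
  have hinj : Function.Injective (LinearMap.applyₗ v ∘ₗ φ.toLinearMap) := by
    refine (injective_iff_map_eq_zero _).mpr fun r hr ↦ by_contra fun hr0 ↦ hv ?_
    have := ((Module.End.isUnit_iff _).mp ((Ne.isUnit hr0).map φ)).injective
    exact this (by simpa using hr)
  have := (cardinalMk_le_rank_fractionRing_polynomial ℂ).trans
    ((LinearMap.rank_le_of_injective _ hinj).trans (h.rank_le_aleph0 hA))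
  rw [Cardinal.mk_complex] at this
  exact Cardinal.aleph0_lt_continuum.not_ge this

theorem AIrred.exists_eqOn (h : AIrred A U ρ) (hρ : HasScalarCommutant ρ) (g : Module.End ℂ U)
    (s : Finset U) : ∃ a, Set.EqOn (ρ a) g s := by
  -- View `U` as an `A`-module through `ρ`: its `A`-endomorphisms are then the maps commuting
  -- with `ρ`, i.e. scalars, so `g` is an endomorphism of `U` over `End_A U`.
  let _ : Module A U := Module.compHom U ρ.toRingHom
  have hsmul (c : ℂ) (x : U) : algebraMap ℂ A c • x = c • x := by
    change ρ _ x = _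
    rw [ρ.commutes, Module.algebraMap_end_apply]
  have : IsSimpleModule A U := by
    have := h.1
    refine { eq_bot_or_eq_top := fun S ↦ ?_ }
    let T : Submodule ℂ U :=
      { S.toAddSubmonoid with
        smul_mem' := fun c x hx ↦ hsmul c x ▸ S.smul_mem (algebraMap ℂ A c) hx }
    rcases h.2 T fun a x hx ↦ S.smul_mem a hx with hT | hT
    · exact .inl (eq_bot_iff.mpr fun x (hx : x ∈ T) ↦ by rwa [hT] at hx)
    · exact .inr (eq_top_iff.mpr fun x _ ↦ (by rw [hT]; trivial : x ∈ T))
  have hg (φ : Module.End A U) (x : U) : g (φ x) = φ (g x) := by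
    let ψ : Module.End ℂ U :=
      { toFun := φ, map_add' := φ.map_add
        map_smul' := fun c y ↦ by
          simpa only [hsmul, RingHom.id_apply] using φ.map_smul (algebraMap ℂ A c) y }
    obtain ⟨c, hc⟩ := hρ ψ fun a ↦ LinearMap.ext (φ.map_smul a)
    have hφ (y : U) : φ y = c • y := LinearMap.congr_fun hc y
    rw [hφ, hφ, map_smul]
  obtain ⟨a, ha⟩ := jacobson_density
    ({ toFun := g, map_add' := g.map_add, map_smul' := hg } : Module.End (Module.End A U) U) s
  exact ⟨a, fun u hu ↦ (ha u hu).symm⟩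

end Irreducible
end Twisted

theorem LinearMap.rTensor_smulRight {R M N : Type*} [CommRing R] [AddCommGroup M] [Module R M]
    [AddCommGroup N] [Module R N] (φ : M →ₗ[R] R) (m : M) (z : M ⊗[R] N) :
    (φ.smulRight m).rTensor N z = m ⊗ₜ TensorProduct.lid R N (φ.rTensor N z) := by
  induction z using TensorProduct.induction_on with
  | zero => simp
  | tmul x y => simp [TensorProduct.smul_tmul]
  | add x y hx hy => simp_all [TensorProduct.tmul_add]

namespace Twisted

section Tensor

variable {A₁ A₂ U₁ U₂ : Type} [Ring A₁] [Algebra ℂ A₁] [Ring A₂] [Algebra ℂ A₂]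
  [AddCommGroup U₁] [Module ℂ U₁] [AddCommGroup U₂] [Module ℂ U₂]
  {ρ₁ : A₁ →ₐ[ℂ] Module.End ℂ U₁} {ρ₂ : A₂ →ₐ[ℂ] Module.End ℂ U₂}
  {ρT : A₁ ⊗[ℂ] A₂ →ₐ[ℂ] Module.End ℂ (U₁ ⊗[ℂ] U₂)}
  {S : Submodule ℂ (U₁ ⊗[ℂ] U₂)}

theorem exists_tmul_mem (h₁ : AIrred A₁ U₁ ρ₁) (hρ₁ : HasScalarCommutant ρ₁)
    (hρT : ∀ a₁ a₂, ρT (a₁ ⊗ₜ[ℂ] a₂) = TensorProduct.map (ρ₁ a₁) (ρ₂ a₂))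
    (hS : ∀ a, ∀ z ∈ S, ρT a z ∈ S) {w : U₁ ⊗[ℂ] U₂} (hw : w ∈ S) (hw0 : w ≠ 0) :
    ∃ p q, p ≠ 0 ∧ q ≠ 0 ∧ p ⊗ₜ[ℂ] q ∈ S := by
  classical
  let b := Module.Basis.ofVectorSpace ℂ U₁
  obtain ⟨i, hi⟩ : ∃ i, TensorProduct.equivFinsuppOfBasisLeft b w i ≠ 0 := by
    by_contra! h
    exact hw0 ((TensorProduct.equivFinsuppOfBasisLeft b).map_eq_zero_iff.mp (Finsupp.ext h))
  rw [TensorProduct.equivFinsuppOfBasisLeft_apply] at hi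
  let g : Module.End ℂ U₁ := (b.coord i).smulRight (b i)
  obtain ⟨t, ht⟩ := TensorProduct.exists_finset w
  obtain ⟨a, ha⟩ := h₁.exists_eqOn hρ₁ g (t.image Prod.fst)
  have hgw : ρT (a ⊗ₜ 1) w = g.rTensor U₂ w := by
    rw [hρT, ht, map_sum, map_sum]
    refine Finset.sum_congr rfl fun x hx ↦ ?_
    simp [ha (Finset.mem_image_of_mem _ hx)]
  refine ⟨b i, _, b.ne_zero i, hi, ?_⟩
  rw [← LinearMap.rTensor_smulRight, ← hgw]
  exact hS _ _ hw

theorem eq_top_of_tmul_mem (h₁ : AIrred A₁ U₁ ρ₁) (h₂ : AIrred A₂ U₂ ρ₂)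
    (hρT : ∀ a₁ a₂, ρT (a₁ ⊗ₜ[ℂ] a₂) = TensorProduct.map (ρ₁ a₁) (ρ₂ a₂))
    (hS : ∀ a, ∀ z ∈ S, ρT a z ∈ S) {p : U₁} {q : U₂} (hp : p ≠ 0) (hq : q ≠ 0)
    (hpq : p ⊗ₜ[ℂ] q ∈ S) : S = ⊤ := by
  have hleft : S.comap ((TensorProduct.mk ℂ U₁ U₂).flip q) = ⊤ :=
    h₁.eq_top_of_mem (fun a z hz ↦ by simpa [hρT] using hS (a ⊗ₜ 1) _ hz) hpq hp
  have hright (z : U₁) : S.comap (TensorProduct.mk ℂ U₁ U₂ z) = ⊤ :=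
    h₂.eq_top_of_mem (fun a y hy ↦ by simpa [hρT] using hS (1 ⊗ₜ a) _ hy)
      (Submodule.eq_top_iff'.mp hleft z) hq
  rw [eq_top_iff, ← TensorProduct.span_tmul_eq_top, Submodule.span_le]
  rintro _ ⟨z, y, rfl⟩
  exact Submodule.eq_top_iff'.mp (hright z) y

end Tensor

/-- If `U₁`, `U₂` are irreducible modules over the unital associative
`ℂ`-algebras `A₁`, `A₂`, and either every `A₁`-endomorphism of `U₁` is a scalar or `A₁`
has countable dimension over `ℂ`, then `U₁ ⊗ U₂` is an irreducible `A₁ ⊗ A₂`-module. -/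
theorem statement10
    (A₁ A₂ : Type) [Ring A₁] [Algebra ℂ A₁] [Ring A₂] [Algebra ℂ A₂]
    (U₁ U₂ : Type) [AddCommGroup U₁] [Module ℂ U₁] [AddCommGroup U₂] [Module ℂ U₂]
    (ρ₁ : A₁ →ₐ[ℂ] Module.End ℂ U₁) (ρ₂ : A₂ →ₐ[ℂ] Module.End ℂ U₂)
    (h₁ : AIrred A₁ U₁ ρ₁) (h₂ : AIrred A₂ U₂ ρ₂)
    (hyp : (∀ f : Module.End ℂ U₁, (∀ a : A₁, f * ρ₁ a = ρ₁ a * f) →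
        ∃ c : ℂ, f = c • (1 : Module.End ℂ U₁)) ∨ CountableDim A₁)
    (ρT : A₁ ⊗[ℂ] A₂ →ₐ[ℂ] Module.End ℂ (U₁ ⊗[ℂ] U₂))
    (hρT : ∀ (a₁ : A₁) (a₂ : A₂),
      ρT (a₁ ⊗ₜ[ℂ] a₂) = TensorProduct.map (ρ₁ a₁) (ρ₂ a₂)) :
    AIrred (A₁ ⊗[ℂ] A₂) (U₁ ⊗[ℂ] U₂) ρT := by
  have hρ₁ : HasScalarCommutant ρ₁ := hyp.elim id h₁.hasScalarCommutant
  have := h₁.1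
  have := h₂.1
  refine ⟨inferInstance, fun S hS ↦ or_iff_not_imp_left.mpr fun hS0 ↦ ?_⟩
  obtain ⟨w, hw, hw0⟩ := (Submodule.ne_bot_iff S).mp hS0
  obtain ⟨p, q, hp, hq, hpq⟩ := exists_tmul_mem h₁ hρ₁ hρT hS hw hw0
  exact eq_top_of_tmul_mem h₁ h₂ hρT hS hp hq hpq

end Twisted
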